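/- arXiv:math/0609046 — 2 statements merged into one kernel-verified Lean document; each statement's English description precedes it below -/
import Mathlib

section
/- (Telescope Lemma) Let X₀, …, X_m be topological disks (open simply connected domains in ℂ), and for k = 0, …, n−1 let φ_k : X_k → φ_k(X_k) be a proper holomorphic branched covering of degree d_k with φ_k(X_k) ⊃ X_{k+1}. Let Φ = φ_{n−1} ∘ ⋯ ∘ φ₀ restricted to a connected component P of its domain of definition. Then Φ : P → X_n is a branched covering of degree at most d₀·d₁⋯d_{n−1}. -/
open Set

/-- A topological disk: a nonempty open simply connected domain in `ℂ`. -/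
def IsTopDisk (U : Set ℂ) : Prop :=
  IsOpen U ∧ U.Nonempty ∧ IsPreconnected U ∧ SimplyConnectedSpace U

/-- `f : U → V` is a (proper holomorphic) branched covering of degree at most `d`:
`f` is holomorphic on `U`, maps `U` onto `V`, is proper over `V`, and every fiber
over `V` has at most `d` points. -/
def IsBranchedCoveringDegLE (f : ℂ → ℂ) (U V : Set ℂ) (d : ℕ) : Prop :=
  DifferentiableOn ℂ f U ∧ MapsTo f U V ∧ SurjOn f U V ∧
  (∀ K, K ⊆ V → IsCompact K → IsCompact (U ∩ f ⁻¹' K)) ∧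
  (∀ v ∈ V, (U ∩ f ⁻¹' {v}).Finite ∧ (U ∩ f ⁻¹' {v}).ncard ≤ d)

/-- The composition `φ_{n-1} ∘ ⋯ ∘ φ_0`. -/
def iterComp (φ : ℕ → ℂ → ℂ) : ℕ → ℂ → ℂ
  | 0 => id
  | n + 1 => φ n ∘ iterComp φ n

/-!
Each `φ_k` is holomorphic, proper onto its image, with fibers of size at most `d_k`, and these
properties pass to compositions (fibers multiply) and to restrictions over `X_{k+1} ⊆ φ_k(X_k)`;
so `Φ` has them on the whole domain of definition, with fibers of size at most `∏ d_k`.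
A connected component `P` of that open domain is relatively closed in it, so `Φ` stays proper
on `P`. By the open mapping theorem `Φ` is open on `P` (it cannot be constant, as `P` would then
be a compact open subset of `ℂ`), and properness makes `Φ(P)` relatively closed in `X_n`;
since `X_n` is connected, `Φ(P) = X_n`.
-/

theorem Set.Finite.ncard_biUnion_le_mul {ι α : Type*} {F : Set ι} (hF : F.Finite)
    {s : ι → Set α} {a : ℕ} (h : ∀ i ∈ F, (s i).ncard ≤ a) :
    (⋃ i ∈ F, s i).ncard ≤ F.ncard * a :=
  calc (⋃ i ∈ F, s i).ncard ≤ ∑ i ∈ hF.toFinset, (s i).ncard := by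
        simpa using hF.toFinset.set_ncard_biUnion_le s
    _ ≤ hF.toFinset.card • a := Finset.sum_le_card_nsmul _ _ _ (by simpa using h)
    _ = F.ncard * a := by rw [smul_eq_mul, ncard_eq_toFinset_card F hF]

theorem inter_closure_connectedComponentIn_subset {α : Type*} [TopologicalSpace α]
    {F : Set α} {x : α} : F ∩ closure (connectedComponentIn F x) ⊆ connectedComponentIn F x := by
  rintro y ⟨hyF, hyc⟩
  by_cases hx : x ∈ F
  · have hconn : IsPreconnected (insert y (connectedComponentIn F x)) :=
      isPreconnected_connectedComponentIn.subset_closure (subset_insert _ _)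
        (insert_subset hyc subset_closure)
    exact hconn.subset_connectedComponentIn (mem_insert_of_mem _ (mem_connectedComponentIn hx))
      (insert_subset hyF (connectedComponentIn_subset _ _)) (mem_insert _ _)
  · simp [connectedComponentIn_eq_empty hx] at hyc

theorem subset_image_of_isOpen_image_of_isCompact_preimage {α β : Type*} [TopologicalSpace α]
    [TopologicalSpace β] [LocallyCompactSpace β] [T2Space β] {f : α → β} {P : Set α}
    {V : Set β} (hf : ContinuousOn f P) (hopen : IsOpen (f '' P))
    (hproper : ∀ K ⊆ V, IsCompact K → IsCompact (P ∩ f ⁻¹' K))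
    (hV : IsOpen V) (hVconn : IsPreconnected V) (hne : (V ∩ f '' P).Nonempty) :
    V ⊆ f '' P := by
  refine hVconn.subset_of_closure_inter_subset hopen hne ?_
  rintro x ⟨hxc, hxV⟩
  obtain ⟨K, hK, hxK, hKV⟩ := exists_compact_subset hV hxV
  have hclosed : IsClosed (f '' (P ∩ f ⁻¹' K)) :=
    ((hproper K hKV hK).image_of_continuousOn (hf.mono inter_subset_left)).isClosed
  have hx : x ∈ closure (f '' (P ∩ f ⁻¹' K)) := by
    rw [image_inter_preimage, inter_comm]
    exact closure_mono (inter_subset_inter_left _ interior_subset)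
      (isOpen_interior.inter_closure ⟨hxK, hxc⟩)
  exact image_mono inter_subset_left (hclosed.closure_subset hx)

namespace IsBranchedCoveringDegLE

variable {f g : ℂ → ℂ} {U V W : Set ℂ} {a b : ℕ}

theorem id (U : Set ℂ) : IsBranchedCoveringDegLE id U U 1 := by
  refine ⟨differentiableOn_id, mapsTo_id U, surjOn_id U, fun K hK hKc => ?_, fun v hv => ?_⟩
  · rwa [preimage_id, inter_eq_right.mpr hK]
  · rw [preimage_id, inter_eq_right.mpr (singleton_subset_iff.mpr hv)]
    simp

theorem comp (hf : IsBranchedCoveringDegLE f U V a) (hg : IsBranchedCoveringDegLE g V W b) :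
    IsBranchedCoveringDegLE (g ∘ f) U W (a * b) := by
  obtain ⟨hfd, hfm, hfs, hfp, hff⟩ := hf
  obtain ⟨hgd, hgm, hgs, hgp, hgf⟩ := hg
  have preimage_comp : ∀ K, U ∩ (g ∘ f) ⁻¹' K = U ∩ f ⁻¹' (V ∩ g ⁻¹' K) := fun K => by
    ext z
    exact ⟨fun ⟨hz, hK⟩ => ⟨hz, hfm hz, hK⟩, fun ⟨hz, _, hK⟩ => ⟨hz, hK⟩⟩
  refine ⟨hgd.comp hfd hfm, hgm.comp hfm, hgs.comp hfs, fun K hK hKc => ?_, fun w hw => ?_⟩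
  · rw [preimage_comp]
    exact hfp _ inter_subset_left (hgp K hK hKc)
  · obtain ⟨hFfin, hFcard⟩ := hgf w hw
    have hfiber : U ∩ (g ∘ f) ⁻¹' {w} = ⋃ v ∈ V ∩ g ⁻¹' {w}, U ∩ f ⁻¹' {v} := by
      rw [preimage_comp, ← inter_iUnion₂, ← preimage_iUnion₂, biUnion_of_singleton]
    rw [hfiber]
    refine ⟨hFfin.biUnion fun v hv => (hff v hv.1).1, ?_⟩
    calc _ ≤ (V ∩ g ⁻¹' {w}).ncard * a := hFfin.ncard_biUnion_le_mul fun v hv => (hff v hv.1).2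
      _ ≤ b * a := Nat.mul_le_mul_right a hFcard
      _ = a * b := Nat.mul_comm b a

theorem restrict_preimage (hf : IsBranchedCoveringDegLE f U V a) (hW : W ⊆ V) :
    IsBranchedCoveringDegLE f (U ∩ f ⁻¹' W) W a := by
  obtain ⟨hfd, -, hfs, hfp, hff⟩ := hf
  have preimage_eq : ∀ K ⊆ W, U ∩ f ⁻¹' W ∩ f ⁻¹' K = U ∩ f ⁻¹' K := fun K hK => by
    rw [inter_assoc, ← preimage_inter, inter_eq_right.mpr hK]
  refine ⟨hfd.mono inter_subset_left, fun z hz => hz.2, fun w hw => ?_,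
    fun K hK hKc => ?_, fun w hw => ?_⟩
  · obtain ⟨z, hz, rfl⟩ := hfs (hW hw)
    exact ⟨z, ⟨hz, hw⟩, rfl⟩
  · rw [preimage_eq K hK]
    exact hfp K (hK.trans hW) hKc
  · rw [preimage_eq {w} (singleton_subset_iff.mpr hw)]
    exact hff w (hW hw)

theorem connectedComponentIn (hf : IsBranchedCoveringDegLE f U V a) (hU : IsOpen U)
    (hV : IsOpen V) (hVconn : IsPreconnected V) {z : ℂ} (hz : z ∈ U) :
    IsBranchedCoveringDegLE f (_root_.connectedComponentIn U z) V a := by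
  obtain ⟨hfd, hfm, -, hfp, hff⟩ := hf
  set P := _root_.connectedComponentIn U z
  have hPU : P ⊆ U := connectedComponentIn_subset U z
  have hPo : IsOpen P := hU.connectedComponentIn
  have hzP : z ∈ P := mem_connectedComponentIn hz
  have hPconn : IsPreconnected P := isPreconnected_connectedComponentIn
  have hproper : ∀ K ⊆ V, IsCompact K → IsCompact (P ∩ f ⁻¹' K) := fun K hK hKc => by
    have hrel : P ∩ f ⁻¹' K = U ∩ f ⁻¹' K ∩ closure P := by
      ext y
      exact ⟨fun ⟨hy, hyK⟩ => ⟨⟨hPU hy, hyK⟩, subset_closure hy⟩,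
        fun ⟨⟨hy, hyK⟩, hyc⟩ => ⟨inter_closure_connectedComponentIn_subset ⟨hy, hyc⟩, hyK⟩⟩
    rw [hrel]
    exact (hfp K hK hKc).inter_right isClosed_closure
  have hsurj : SurjOn f P V := by
    rcases ((hfd.mono hPU).analyticOnNhd hPo).is_constant_or_isOpen hPconn with ⟨c, hc⟩ | hopen
    · have hPc : IsCompact P := by
        have hfiber : P ∩ f ⁻¹' {c} = P := inter_eq_self_of_subset_left hc
        rw [← hfiber]
        exact hproper {c} (singleton_subset_iff.mpr (hc z hzP ▸ hfm (hPU hzP))) isCompact_singleton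
      rcases isClopen_iff.mp ⟨hPc.isClosed, hPo⟩ with h | h
      · exact absurd (h ▸ hzP) (notMem_empty z)
      · exact absurd (h ▸ hPc) (noncompact_univ ℂ)
    · exact subset_image_of_isOpen_image_of_isCompact_preimage ((hfd.mono hPU).continuousOn)
        (hopen P subset_rfl hPo) hproper hV hVconn ⟨f z, hfm (hPU hzP), mem_image_of_mem f hzP⟩
  refine ⟨hfd.mono hPU, hfm.mono_left hPU, hsurj, hproper, fun v hv => ?_⟩
  have hsub : P ∩ f ⁻¹' {v} ⊆ U ∩ f ⁻¹' {v} := inter_subset_inter_left _ hPU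
  exact ⟨(hff v hv).1.subset hsub, (ncard_le_ncard hsub (hff v hv).1).trans (hff v hv).2⟩

end IsBranchedCoveringDegLE

section iterComp

variable (X : ℕ → Set ℂ) (φ : ℕ → ℂ → ℂ) (d : ℕ → ℕ)

def domainOfDefinition (n : ℕ) : Set ℂ :=
  {z | z ∈ X 0 ∧ ∀ k < n, iterComp φ (k + 1) z ∈ X (k + 1)}

theorem domainOfDefinition_zero : domainOfDefinition X φ 0 = X 0 := by
  simp [domainOfDefinition]

theorem domainOfDefinition_succ (n : ℕ) :
    domainOfDefinition X φ (n + 1) =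
      domainOfDefinition X φ n ∩ iterComp φ (n + 1) ⁻¹' X (n + 1) := by
  ext z
  simp only [domainOfDefinition, mem_ofPred_eq, mem_inter_iff, mem_preimage,
    Nat.forall_lt_succ_right, and_assoc]

variable {X φ d}

theorem isBranchedCoveringDegLE_iterComp (n : ℕ)
    (hφ : ∀ k < n, IsBranchedCoveringDegLE (φ k) (X k) (φ k '' X k) (d k))
    (hsub : ∀ k < n, X (k + 1) ⊆ φ k '' X k) :
    IsBranchedCoveringDegLE (iterComp φ n) (domainOfDefinition X φ n) (X n)
      (∏ k ∈ Finset.range n, d k) := by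
  induction n with
  | zero => rw [domainOfDefinition_zero]; exact IsBranchedCoveringDegLE.id (X 0)
  | succ n ih =>
    rw [domainOfDefinition_succ, Finset.prod_range_succ]
    exact ((ih (fun k hk => hφ k (by omega)) (fun k hk => hsub k (by omega))).comp
      (hφ n (by omega))).restrict_preimage (hsub n (by omega))

theorem isOpen_domainOfDefinition (n : ℕ) (hX : ∀ k ≤ n, IsOpen (X k))
    (hφ : ∀ k < n, IsBranchedCoveringDegLE (φ k) (X k) (φ k '' X k) (d k))
    (hsub : ∀ k < n, X (k + 1) ⊆ φ k '' X k) :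
    IsOpen (domainOfDefinition X φ n) := by
  induction n with
  | zero => simpa [domainOfDefinition_zero] using hX 0 le_rfl
  | succ n ih =>
    have hcomp := (isBranchedCoveringDegLE_iterComp n (fun k hk => hφ k (by omega))
      (fun k hk => hsub k (by omega))).comp (hφ n (by omega))
    rw [domainOfDefinition_succ]
    exact hcomp.1.continuousOn.isOpen_inter_preimage
      (ih (fun k hk => hX k (by omega)) (fun k hk => hφ k (by omega))
        (fun k hk => hsub k (by omega))) (hX (n + 1) le_rfl)

end iterComp

/-- **Telescope Lemma.** Let `X_0, …, X_n` be topological disks and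
`φ_k : X_k → φ_k(X_k)` branched coverings of degree `d_k` with `φ_k(X_k) ⊇ X_{k+1}`.
Let `Φ = φ_{n-1} ∘ ⋯ ∘ φ_0` and let `P` be a connected component of its domain of
definition. Then `Φ : P → X_n` is a branched covering of degree at most `d_0 ⋯ d_{n-1}`. -/
theorem telescope (n : ℕ) (X : ℕ → Set ℂ) (φ : ℕ → ℂ → ℂ) (d : ℕ → ℕ)
    (hX : ∀ k ≤ n, IsTopDisk (X k))
    (hφ : ∀ k < n, IsBranchedCoveringDegLE (φ k) (X k) (φ k '' X k) (d k))
    (hsub : ∀ k < n, X (k + 1) ⊆ φ k '' X k)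
    (P : Set ℂ) (z₀ : ℂ)
    (hz₀ : z₀ ∈ X 0 ∧ ∀ k < n, iterComp φ (k + 1) z₀ ∈ X (k + 1))
    (hP : P = connectedComponentIn
      {z | z ∈ X 0 ∧ ∀ k < n, iterComp φ (k + 1) z ∈ X (k + 1)} z₀) :
    IsBranchedCoveringDegLE (iterComp φ n) P (X n) (∏ k ∈ Finset.range n, d k) := by
  subst hP
  exact (isBranchedCoveringDegLE_iterComp n hφ hsub).connectedComponentIn
    (isOpen_domainOfDefinition n (fun k hk => (hX k hk).1) hφ hsub) (hX n le_rfl).1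
    (hX n le_rfl).2.2.1 hz₀
end

section
/- (Geometric decay from step improvement) Suppose (a_n) is a sequence of positive reals, N a positive integer, and ε > 0 such that whenever a_n < ε (for n ≥ N) there exists s with 1 ≤ s ≤ N and a_{n−s} < a_n/2, and additionally a_{n−1} ≤ 4·a_n for all n ≥ 1. Then there exist constants C' > 0 and ρ ∈ (0,1), depending only on N, such that whenever a_n < ε one has a_0 ≤ C'·ρⁿ·a_n. -/
/-- **Geometric decay from step improvement.** Let `(a_n)` be positive reals, `N ≥ 1`,
`ε > 0`, such that whenever `a_n < ε` with `n ≥ N` there is `s ∈ [1, N]` with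
`a_{n−s} < a_n/2`, and `a_{n−1} ≤ 4·a_n` for all `n ≥ 1`. Then there are `C' > 0` and
`ρ ∈ (0,1)`, depending only on `N`, such that `a_n < ε` implies `a_0 ≤ C'·ρⁿ·a_n`. -/
theorem geometric_decay (N : ℕ) (hN : 1 ≤ N) :
    ∃ C' : ℝ, 0 < C' ∧ ∃ ρ : ℝ, ρ ∈ Set.Ioo (0:ℝ) 1 ∧
      ∀ (a : ℕ → ℝ) (ε : ℝ), 0 < ε → (∀ n, 0 < a n) →
        (∀ n, N ≤ n → a n < ε → ∃ s, 1 ≤ s ∧ s ≤ N ∧ a (n - s) < a n / 2) →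
        (∀ n, 1 ≤ n → a (n - 1) ≤ 4 * a n) →
        ∀ n, a n < ε → a 0 ≤ C' * ρ ^ n * a n := by
  have hNR : (0:ℝ) < (N:ℝ) := by exact_mod_cast Nat.pos_of_ne_zero (by omega)
  set ρ : ℝ := (2:ℝ) ^ (-(1/(N:ℝ))) with hρdef
  have hρpos : 0 < ρ := Real.rpow_pos_of_pos (by norm_num) _
  have hρlt1 : ρ < 1 :=
    Real.rpow_lt_one_of_one_lt_of_neg (by norm_num) (by
      simp only [neg_neg, neg_lt_zero]; positivity)
  have hρN : ρ ^ N = 1/2 := by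
    rw [hρdef, ← Real.rpow_natCast ((2:ℝ) ^ (-(1/(N:ℝ)))) N,
      ← Real.rpow_mul (by norm_num)]
    have : -(1/(N:ℝ)) * (N:ℕ) = -1 := by field_simp
    rw [this]
    norm_num
  refine ⟨4^N, by positivity, ρ, ⟨hρpos, hρlt1⟩, ?_⟩
  intro a ε hε ha hstep hcmp
  have hchain : ∀ m, a 0 ≤ 4 ^ m * a m := by
    intro m
    induction m with
    | zero => simp
    | succ k ih =>
      have h1 : a k ≤ 4 * a (k+1) := by
        have := hcmp (k+1) (by omega)
        simpa using this
      calc a 0 ≤ 4 ^ k * a k := ih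
        _ ≤ 4 ^ k * (4 * a (k+1)) := by
            have : (0:ℝ) < 4 ^ k := by positivity
            nlinarith
        _ = 4 ^ (k+1) * a (k+1) := by ring
  intro n
  induction n using Nat.strong_induction_on with
  | _ n ih =>
    intro hn
    by_cases hcase : N ≤ n
    · obtain ⟨s, hs1, hsN, hdec⟩ := hstep n hcase hn
      have hlt : a (n - s) < ε := lt_trans hdec (by linarith [ha n])
      have h1 := ih (n - s) (by omega) hlt
      have hρs : (1/2:ℝ) ≤ ρ ^ s := by
        calc (1/2:ℝ) = ρ ^ N := hρN.symm
          _ ≤ ρ ^ s := pow_le_pow_of_le_one hρpos.le hρlt1.le hsN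
      have hsplit : ρ ^ n = ρ ^ (n - s) * ρ ^ s := by
        rw [← pow_add]; congr 1; omega
      have hC : (0:ℝ) < 4 ^ N := by positivity
      have hρns : (0:ℝ) < ρ ^ (n - s) := by positivity
      calc a 0 ≤ 4 ^ N * ρ ^ (n - s) * a (n - s) := h1
        _ ≤ 4 ^ N * ρ ^ (n - s) * (a n / 2) :=
            mul_le_mul_of_nonneg_left hdec.le (by positivity)
        _ = (4 ^ N * ρ ^ (n - s) * a n) * (1/2) := by ring
        _ ≤ (4 ^ N * ρ ^ (n - s) * a n) * ρ ^ s :=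
            mul_le_mul_of_nonneg_left hρs (by have := ha n; positivity)
        _ = 4 ^ N * ρ ^ n * a n := by rw [hsplit]; ring
    · have hn' : n + 1 ≤ N := by omega
      have h4 : (4:ℝ) ^ n * 2 ≤ 4 ^ N := by
        calc (4:ℝ) ^ n * 2 ≤ 4 ^ n * 4 := by nlinarith [pow_pos (show (0:ℝ)<4 by norm_num) n]
          _ = 4 ^ (n+1) := by ring
          _ ≤ 4 ^ N := pow_le_pow_right₀ (by norm_num) hn'
      have hρn : (1/2:ℝ) ≤ ρ ^ n :=
        hρN ▸ pow_le_pow_of_le_one hρpos.le hρlt1.le (by omega)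
      calc a 0 ≤ 4 ^ n * a n := hchain n
        _ ≤ 4 ^ N * ρ ^ n * a n := by
            refine mul_le_mul_of_nonneg_right ?_ (ha n).le
            have h2 : 4 ^ N * (1/2:ℝ) ≤ 4 ^ N * ρ ^ n :=
              mul_le_mul_of_nonneg_left hρn (by positivity)
            linarith
end
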